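/- Let w be a weight structure on a triangulated category C, and D ⊂ C a triangulated subcategory such that w induces a weight structure on D (meaning Obj D ∩ C^{w≤0} and Obj D ∩ C^{w≥0} form a weight structure for D). Then the Karoubi-closures of C^{w≤0} and C^{w≥0}, considered as classes of objects of the Verdier quotient C/D, define a weight structure w' on C/D. -/

import Mathlib

open CategoryTheory Category Limits Pretriangulated

/-- `X` is a retract of `Y`. -/
def IsRetract {C : Type*} [Category C] (X Y : C) : Prop :=
  ∃ (i : X ⟶ Y) (r : Y ⟶ X), i ≫ r = 𝟙 X

/-- A weight structure on a triangulated category `C`, given by the pair of classes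
`le = C^{w≤0}` and `ge = C^{w≥0}` (Bondarko). -/
structure IsWeightStructure (C : Type*) [Category C] [HasZeroObject C] [HasShift C ℤ]
    [Preadditive C] [∀ n : ℤ, (shiftFunctor C n).Additive] [Pretriangulated C]
    (le ge : Set C) : Prop where
  le_retract : ∀ ⦃X Y : C⦄, Y ∈ le → IsRetract X Y → X ∈ le
  ge_retract : ∀ ⦃X Y : C⦄, Y ∈ ge → IsRetract X Y → X ∈ ge
  le_shift : ∀ ⦃X : C⦄, X ∈ le → X⟦(1 : ℤ)⟧ ∈ le
  ge_shift : ∀ ⦃X : C⦄, X ∈ ge → X⟦(-1 : ℤ)⟧ ∈ ge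
  orth : ∀ ⦃X Y : C⦄, X ∈ ge → Y ∈ le → ∀ f : X ⟶ Y⟦(1 : ℤ)⟧, f = 0
  decomp : ∀ M : C, ∃ (A B : C) (_ : A ∈ le) (_ : B ∈ ge)
    (f : M ⟶ A) (g : A ⟶ B) (h : B ⟶ M⟦(1 : ℤ)⟧), Triangle.mk f g h ∈ distTriang C
variable {C : Type*} [Category C] [HasZeroObject C] [HasShift C ℤ]
  [Preadditive C] [∀ n : ℤ, (shiftFunctor C n).Additive] [Pretriangulated C]
variable {E : Type*} [Category E] [HasZeroObject E] [HasShift E ℤ]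
  [Preadditive E] [∀ n : ℤ, (shiftFunctor E n).Additive] [Pretriangulated E]

/-- `T` is the class of objects of a strictly full triangulated subcategory:
closed under isomorphisms, shifts in both directions, and cones. -/
def TriangClosed (T : Set C) : Prop :=
  (∀ ⦃X Y : C⦄, Y ∈ T → Nonempty (X ≅ Y) → X ∈ T) ∧
  (∀ ⦃X : C⦄, X ∈ T → X⟦(1 : ℤ)⟧ ∈ T) ∧
  (∀ ⦃X : C⦄, X ∈ T → X⟦(-1 : ℤ)⟧ ∈ T) ∧
  (∀ Tr ∈ distTriang C, Tr.obj₁ ∈ T → Tr.obj₂ ∈ T → Tr.obj₃ ∈ T)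

/-- A weight structure on the full triangulated subcategory of `C` whose objects form
the class `T` (all conditions are relativized to `T`). -/
structure IsWeightStructureOn (T le ge : Set C) : Prop where
  le_sub : le ⊆ T
  ge_sub : ge ⊆ T
  le_retract : ∀ ⦃X Y : C⦄, X ∈ T → Y ∈ le → IsRetract X Y → X ∈ le
  ge_retract : ∀ ⦃X Y : C⦄, X ∈ T → Y ∈ ge → IsRetract X Y → X ∈ ge
  le_shift : ∀ ⦃X : C⦄, X ∈ le → X⟦(1 : ℤ)⟧ ∈ le
  ge_shift : ∀ ⦃X : C⦄, X ∈ ge → X⟦(-1 : ℤ)⟧ ∈ ge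
  orth : ∀ ⦃X Y : C⦄, X ∈ ge → Y ∈ le → ∀ f : X ⟶ Y⟦(1 : ℤ)⟧, f = 0
  decomp : ∀ M ∈ T, ∃ (A B : C) (_ : A ∈ le) (_ : B ∈ ge)
    (f : M ⟶ A) (g : A ⟶ B) (h : B ⟶ M⟦(1 : ℤ)⟧), Triangle.mk f g h ∈ distTriang C

/-- The class of morphisms of `C` whose cone lies in `DSet`; the Verdier quotient `C/D`
is the localization of `C` at this class. -/
def coneInClass (DSet : Set C) : MorphismProperty C := fun X _ f =>
  ∃ (Z : C) (g : _ ⟶ Z) (h : Z ⟶ X⟦(1 : ℤ)⟧),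
    Triangle.mk f g h ∈ (distTriang C) ∧ Z ∈ DSet

/-!
Only orthogonality is not formal. Morphisms `L X ⟶ L Z` of the quotient are right fractions
`(L s)⁻¹ ≫ L f` whose denominator `s` is a composite of morphisms with cone in `D`. If `X` is in
`C^{w≥0}`, the source of `s` can be replaced by an object of `C^{w≥0}` mapping to `X` through a
denominator: given the cone `N ∈ D` of `s`, its `D`-weight decomposition `B → N → A⟦1⟧` and a map
`Q → N` with `Q ∈ C^{w≥0}`, the composite `Q → A⟦1⟧` vanishes by orthogonality, so `Q → N` lifts
to `B`, and the fiber of `Q → B` is an extension of `Q` by `B⟦-1⟧`, hence again in `C^{w≥0}`.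
A morphism `L X ⟶ L (Y⟦1⟧)` with `Y ∈ C^{w≤0}` is thus, up to an isomorphism, the image of a
morphism from `C^{w≥0}` to `Y⟦1⟧`, which is zero.
-/

namespace IsRetract

variable {D : Type*} [Category D]

lemma refl (X : D) : IsRetract X X := ⟨𝟙 X, 𝟙 X, comp_id _⟩

lemma of_iso {X Y : D} (e : X ≅ Y) : IsRetract X Y := ⟨e.hom, e.inv, e.hom_inv_id⟩

lemma trans {X Y Z : D} (h₁ : IsRetract X Y) (h₂ : IsRetract Y Z) : IsRetract X Z := by
  obtain ⟨i₁, r₁, h₁⟩ := h₁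
  obtain ⟨i₂, r₂, h₂⟩ := h₂
  exact ⟨i₁ ≫ i₂, r₂ ≫ r₁, by rw [assoc, reassoc_of% h₂, h₁]⟩

lemma map {D' : Type*} [Category D'] {X Y : D} (h : IsRetract X Y) (F : D ⥤ D') :
    IsRetract (F.obj X) (F.obj Y) := by
  obtain ⟨i, r, h⟩ := h
  exact ⟨F.map i, F.map r, by rw [← F.map_comp, h, F.map_id]⟩

lemma shift_obj {C₁ C₂ : Type*} [Category C₁] [Category C₂] [HasShift C₁ ℤ] [HasShift C₂ ℤ]
    (L : C₁ ⥤ C₂) [L.CommShift ℤ] {Y : C₂} {X : C₁} (h : IsRetract Y (L.obj X)) (n : ℤ) :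
    IsRetract (Y⟦n⟧) (L.obj (X⟦n⟧)) :=
  (h.map (shiftFunctor C₂ n)).trans (of_iso ((L.commShiftIso n).app X).symm)

lemma hom_eq_zero [Preadditive D] {X' X Y' Y : D} (hX : IsRetract X' X) (hY : IsRetract Y' Y)
    (h : ∀ f : X ⟶ Y, f = 0) (f : X' ⟶ Y') : f = 0 := by
  obtain ⟨i, r, hir⟩ := hX
  obtain ⟨i', r', hir'⟩ := hY
  calc f = i ≫ (r ≫ f ≫ i') ≫ r' := by simp only [assoc, hir', reassoc_of% hir, comp_id]
    _ = 0 := by rw [h (r ≫ f ≫ i'), zero_comp, comp_zero]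

end IsRetract

namespace IsWeightStructure

variable {le ge : Set C}

lemma mem_ge_of_forall_hom_eq_zero (w : IsWeightStructure C le ge) {X : C}
    (h : ∀ Y ∈ le, ∀ f : X ⟶ Y⟦(1 : ℤ)⟧, f = 0) : X ∈ ge := by
  obtain ⟨A, B, hA, hB, f, g, k, hT⟩ := w.decomp (X⟦(-1 : ℤ)⟧)
  have hf : f⟦(1 : ℤ)⟧' = 0 := by
    rw [← cancel_epi (shiftNegShift X (1 : ℤ)).inv, comp_zero]
    exact h A hA _
  obtain ⟨σ, hσ⟩ := Triangle.coyoneda_exact₁ _ hT (𝟙 _) (by rw [id_comp]; exact hf)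
  exact w.ge_retract (w.ge_retract hB ⟨σ, k, hσ.symm⟩) (.of_iso (shiftNegShift X (1 : ℤ)).symm)

lemma ge_ext₂ (w : IsWeightStructure C le ge) (T : Triangle C) (hT : T ∈ distTriang C)
    (h₁ : T.obj₁ ∈ ge) (h₃ : T.obj₃ ∈ ge) : T.obj₂ ∈ ge := by
  refine w.mem_ge_of_forall_hom_eq_zero fun Y hY φ => ?_
  obtain ⟨ψ, rfl⟩ := Triangle.yoneda_exact₂ T hT φ (w.orth h₁ hY _)
  rw [w.orth h₃ hY ψ, comp_zero]

end IsWeightStructure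

namespace CategoryTheory.MorphismProperty

variable {D : Type*} [Category D] (W : MorphismProperty D)

lemma exists_comm_sq_multiplicativeClosure (P : Set D)
    (hW : ∀ ⦃X Y Q : D⦄ (s : X ⟶ Y), W s → ∀ q : Q ⟶ Y, Q ∈ P →
      ∃ (Q' : D) (p : Q' ⟶ Q) (g : Q' ⟶ X), Q' ∈ P ∧ W p ∧ g ≫ s = p ≫ q)
    ⦃X Y : D⦄ (s : X ⟶ Y) (hs : W.multiplicativeClosure s) ⦃Q : D⦄ (q : Q ⟶ Y) (hQ : Q ∈ P) :
    ∃ (Q' : D) (p : Q' ⟶ Q) (g : Q' ⟶ X),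
      Q' ∈ P ∧ W.multiplicativeClosure p ∧ g ≫ s = p ≫ q := by
  induction hs generalizing Q with
  | of s hs =>
    obtain ⟨Q', p, g, hQ', hp, h⟩ := hW s hs q hQ
    exact ⟨Q', p, g, hQ', .of p hp, h⟩
  | id X => exact ⟨Q, 𝟙 Q, q, hQ, .id Q, by rw [comp_id, id_comp]⟩
  | comp_of s₁ s₂ _ hs₂ ih =>
    obtain ⟨Q₁, p₁, g₁, hQ₁, hp₁, h₁⟩ := hW s₂ hs₂ q hQ
    obtain ⟨Q₂, p₂, g₂, hQ₂, hp₂, h₂⟩ := ih g₁ hQ₁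
    exact ⟨Q₂, p₂ ≫ p₁, g₂, hQ₂, .comp_of p₂ p₁ hp₂ hp₁, by
      rw [reassoc_of% h₂, h₁, assoc]⟩

lemma exists_comp_eq_zero_multiplicativeClosure [Preadditive D]
    (hW : ∀ ⦃X Y Y' : D⦄ (s : Y ⟶ Y'), W s → ∀ f : X ⟶ Y, f ≫ s = 0 →
      ∃ (X' : D) (t : X' ⟶ X), W t ∧ t ≫ f = 0)
    ⦃Y Y' : D⦄ (s : Y ⟶ Y') (hs : W.multiplicativeClosure s) ⦃X : D⦄ (f : X ⟶ Y)
    (hf : f ≫ s = 0) :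
    ∃ (X' : D) (t : X' ⟶ X), W.multiplicativeClosure t ∧ t ≫ f = 0 := by
  induction hs generalizing X with
  | of s hs =>
    obtain ⟨X', t, ht, h⟩ := hW s hs f hf
    exact ⟨X', t, .of t ht, h⟩
  | id Y => exact ⟨X, 𝟙 X, .id X, by rw [id_comp]; rwa [comp_id] at hf⟩
  | comp_of s₁ s₂ _ hs₂ ih =>
    obtain ⟨X₁, t₁, ht₁, h₁⟩ := hW s₂ hs₂ (f ≫ s₁) (by rwa [assoc])
    obtain ⟨X₂, t₂, ht₂, h₂⟩ := ih (t₁ ≫ f) (by rwa [assoc])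
    exact ⟨X₂, t₂ ≫ t₁, .comp_of t₂ t₁ ht₂ ht₁, by rwa [assoc]⟩

lemma hasRightCalculusOfFractions_multiplicativeClosure [Preadditive D]
    (hore : ∀ ⦃X Y Q : D⦄ (s : X ⟶ Y), W s → ∀ q : Q ⟶ Y,
      ∃ (Q' : D) (p : Q' ⟶ Q) (g : Q' ⟶ X), W p ∧ g ≫ s = p ≫ q)
    (hcancel : ∀ ⦃X Y Y' : D⦄ (s : Y ⟶ Y'), W s → ∀ f : X ⟶ Y, f ≫ s = 0 →
      ∃ (X' : D) (t : X' ⟶ X), W t ∧ t ≫ f = 0) :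
    W.multiplicativeClosure.HasRightCalculusOfFractions where
  exists_rightFraction X Y φ := by
    obtain ⟨Q, p, g, -, hp, h⟩ := W.exists_comm_sq_multiplicativeClosure Set.univ
      (fun _ _ _ s hs q _ => by
        obtain ⟨Q', p, g, hp, h⟩ := hore s hs q
        exact ⟨Q', p, g, trivial, hp, h⟩) φ.s φ.hs φ.f trivial
    exact ⟨⟨p, hp, g⟩, h.symm⟩
  ext X Y Y' f₁ f₂ s hs h := by
    obtain ⟨X', t, ht, h₀⟩ := W.exists_comp_eq_zero_multiplicativeClosure hcancel s hs (f₁ - f₂)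
      (by rw [Preadditive.sub_comp, h, sub_self])
    exact ⟨X', t, ht, by rwa [Preadditive.comp_sub, sub_eq_zero] at h₀⟩

end CategoryTheory.MorphismProperty

lemma CategoryTheory.Functor.isLocalization_multiplicativeClosure {D D' : Type*} [Category D]
    [Category D'] (L : D ⥤ D') (W : MorphismProperty D) [L.IsLocalization W] :
    L.IsLocalization W.multiplicativeClosure :=
  IsLocalization.of_equivalence_source L W L _ (Equivalence.refl)
    (fun _ _ f hf => W.multiplicativeClosure.le_isoClosure _ (.of f hf))
    ((W.multiplicativeClosure_le_iff ((MorphismProperty.isomorphisms D').inverseImage L)).2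
      (Localization.inverts L W))
    L.leftUnitor

lemma Triangle.distinguished_of_iso₁ {D : Type*} [Category D] [HasZeroObject D] [HasShift D ℤ]
    [Preadditive D] [∀ n : ℤ, (shiftFunctor D n).Additive] [Pretriangulated D]
    {T : Triangle D} (hT : T ∈ distTriang D) {X : D} (e : X ≅ T.obj₁) :
    Triangle.mk (e.hom ≫ T.mor₁) T.mor₂ (T.mor₃ ≫ e.inv⟦(1 : ℤ)⟧') ∈ distTriang D := by
  have h₃ : (T.mor₃ ≫ e.inv⟦(1 : ℤ)⟧') ≫ e.hom⟦(1 : ℤ)⟧' = 𝟙 T.obj₃ ≫ T.mor₃ := by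
    simp [← Functor.map_comp]
  exact isomorphic_distinguished _ hT _ (Triangle.isoMk _ _ e (Iso.refl T.obj₂) (Iso.refl T.obj₃)
    (comp_id _) ((comp_id _).trans (id_comp _).symm) h₃)

section coneInClass

variable {DSet : Set C}

lemma coneInClass_exists_comm_sq ⦃X Y Q : C⦄ (s : X ⟶ Y) (hs : coneInClass DSet s)
    (q : Q ⟶ Y) :
    ∃ (Q' : C) (p : Q' ⟶ Q) (g : Q' ⟶ X), coneInClass DSet p ∧ g ≫ s = p ≫ q := by
  obtain ⟨N, e, h, hT, hN⟩ := hs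
  obtain ⟨Q', p, z, hT'⟩ := distinguished_cocone_triangle₁ (q ≫ e)
  have hpq : (p ≫ q) ≫ e = 0 := by rw [assoc]; exact comp_distTriang_mor_zero₁₂ _ hT'
  obtain ⟨g, hg⟩ := Triangle.coyoneda_exact₂ _ hT (p ≫ q) hpq
  exact ⟨Q', p, g, ⟨N, _, z, hT', hN⟩, hg.symm⟩

lemma coneInClass_exists_comp_eq_zero (hD : ∀ ⦃X : C⦄, X ∈ DSet → X⟦(-1 : ℤ)⟧ ∈ DSet)
    ⦃X Y Y' : C⦄ (s : Y ⟶ Y') (hs : coneInClass DSet s) (f : X ⟶ Y) (hf : f ≫ s = 0) :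
    ∃ (X' : C) (t : X' ⟶ X), coneInClass DSet t ∧ t ≫ f = 0 := by
  obtain ⟨N, e, h, hT, hN⟩ := hs
  obtain ⟨g, hg⟩ := Triangle.coyoneda_exact₂ _ (inv_rot_of_distTriang _ hT) f hf
  obtain ⟨X', t, z, hT'⟩ := distinguished_cocone_triangle₁ g
  have htg : t ≫ g = 0 := comp_distTriang_mor_zero₁₂ _ hT'
  have htf : t ≫ f = (t ≫ g) ≫ (Triangle.mk s e h).invRotate.mor₁ := by
    rw [hg]; exact (assoc _ _ _).symm
  exact ⟨X', t, ⟨_, g, z, hT', hD hN⟩, by rw [htf, htg]; exact zero_comp⟩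

/-- Without the octahedral axiom `coneInClass DSet` need not be closed under composition, so the
calculus of fractions is set up for its multiplicative closure. -/
lemma hasRightCalculusOfFractions_coneInClass
    (hD : ∀ ⦃X : C⦄, X ∈ DSet → X⟦(-1 : ℤ)⟧ ∈ DSet) :
    (coneInClass DSet).multiplicativeClosure.HasRightCalculusOfFractions :=
  MorphismProperty.hasRightCalculusOfFractions_multiplicativeClosure _
    coneInClass_exists_comm_sq (coneInClass_exists_comp_eq_zero hD)

end coneInClass

section VerdierQuotient

variable {le ge DSet : Set C}

lemma coneInClass_exists_comm_sq_of_mem_ge (w : IsWeightStructure C le ge)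
    (hD : ∀ ⦃X : C⦄, X ∈ DSet → X⟦(-1 : ℤ)⟧ ∈ DSet)
    (hind : IsWeightStructureOn DSet (DSet ∩ le) (DSet ∩ ge))
    ⦃X Y Q : C⦄ (s : X ⟶ Y) (hs : coneInClass DSet s) (q : Q ⟶ Y) (hQ : Q ∈ ge) :
    ∃ (Q' : C) (p : Q' ⟶ Q) (g : Q' ⟶ X), Q' ∈ ge ∧ coneInClass DSet p ∧ g ≫ s = p ≫ q := by
  obtain ⟨N, e, h, hT, hN⟩ := hs
  obtain ⟨A, B, hA, hB, a, b, k, hT₂⟩ := hind.decomp (N⟦(-1 : ℤ)⟧) (hD hN)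
  obtain ⟨c, hc⟩ : ∃ c : Q ⟶ B, q ≫ e ≫ (shiftNegShift N (1 : ℤ)).inv = c ≫ k :=
    Triangle.coyoneda_exact₁ _ hT₂ _ (w.orth hQ hA.2 _)
  obtain ⟨Q', p, z, hT₃⟩ := distinguished_cocone_triangle₁ c
  have hpc : p ≫ c = 0 := comp_distTriang_mor_zero₁₂ _ hT₃
  have hpqe : (p ≫ q) ≫ e = 0 := by
    rw [← cancel_mono (shiftNegShift N (1 : ℤ)).inv, zero_comp, assoc, assoc, hc,
      reassoc_of% hpc, zero_comp]
  obtain ⟨g, hg⟩ := Triangle.coyoneda_exact₂ _ hT (p ≫ q) hpqe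
  exact ⟨Q', p, g, w.ge_ext₂ _ (inv_rot_of_distTriang _ hT₃) (w.ge_shift hB.2) hQ,
    ⟨B, c, z, hT₃, hB.1⟩, hg.symm⟩

lemma localization_hom_eq_zero (w : IsWeightStructure C le ge)
    (hD : ∀ ⦃X : C⦄, X ∈ DSet → X⟦(-1 : ℤ)⟧ ∈ DSet)
    (hind : IsWeightStructureOn DSet (DSet ∩ le) (DSet ∩ ge))
    {D : Type*} [Category D] [HasZeroMorphisms D] (L : C ⥤ D) [L.PreservesZeroMorphisms]
    [L.IsLocalization (coneInClass DSet)] {X Z : C}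
    (hX : X ∈ ge) (hZ : ∀ Q ∈ ge, ∀ f : Q ⟶ Z, f = 0) (φ : L.obj X ⟶ L.obj Z) : φ = 0 := by
  have := hasRightCalculusOfFractions_coneInClass hD
  have := L.isLocalization_multiplicativeClosure (coneInClass DSet)
  obtain ⟨ψ, rfl⟩ := Localization.exists_rightFraction L (coneInClass DSet).multiplicativeClosure φ
  obtain ⟨Q, p, g, hQ, hp, hgp⟩ :=
    (coneInClass DSet).exists_comm_sq_multiplicativeClosure ge
      (coneInClass_exists_comm_sq_of_mem_ge w hD hind) ψ.s ψ.hs (𝟙 X) hX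
  have := Localization.inverts L _ p hp
  rw [comp_id] at hgp
  rw [← cancel_epi (L.map p), comp_zero, ← hgp, L.map_comp, assoc,
    MorphismProperty.RightFraction.map_s_comp_map, ← L.map_comp, hZ Q hQ (g ≫ ψ.f), L.map_zero]

end VerdierQuotient

/-- Let `w` be a weight structure on `C` and `D ⊂ C` a triangulated subcategory (with
class of objects `DSet`) such that `w` induces a weight structure on `D`. Let
`L : C ⥤ E` be the Verdier quotient functor `C → C/D` (an exact essentially surjective
localization at the morphisms whose cone is in `D`). Then the Karoubi-closures of
`L(C^{w≤0})` and `L(C^{w≥0})` define a weight structure on `C/D`. -/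
theorem weightStructure_on_verdier_quotient
    (le ge : Set C) (w : IsWeightStructure C le ge)
    (DSet : Set C) (hD : TriangClosed DSet)
    (hind : IsWeightStructureOn DSet (DSet ∩ le) (DSet ∩ ge))
    (L : C ⥤ E) [L.CommShift ℤ] [L.IsTriangulated] [L.EssSurj]
    [L.IsLocalization (coneInClass DSet)] :
    IsWeightStructure E
      {Y : E | ∃ X ∈ le, IsRetract Y (L.obj X)}
      {Y : E | ∃ X ∈ ge, IsRetract Y (L.obj X)} := by
  refine ⟨?_, ?_, ?_, ?_, ?_, fun M => ?_⟩
  · exact fun _ _ ⟨Z, hZ, hYZ⟩ hXY => ⟨Z, hZ, hXY.trans hYZ⟩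
  · exact fun _ _ ⟨Z, hZ, hYZ⟩ hXY => ⟨Z, hZ, hXY.trans hYZ⟩
  · exact fun _ ⟨Z, hZ, hXZ⟩ => ⟨_, w.le_shift hZ, hXZ.shift_obj L 1⟩
  · exact fun _ ⟨Z, hZ, hXZ⟩ => ⟨_, w.ge_shift hZ, hXZ.shift_obj L (-1)⟩
  · exact fun _ _ ⟨X, hX, hX'⟩ ⟨Y, hY, hY'⟩ => hX'.hom_eq_zero (hY'.shift_obj L 1)
      (localization_hom_eq_zero w hD.2.2.1 hind L hX fun _ hQ => w.orth hQ hY)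
  · obtain ⟨A, B, hA, hB, f, g, h, hT⟩ := w.decomp (L.objPreimage M)
    exact ⟨_, _, ⟨A, hA, .refl _⟩, ⟨B, hB, .refl _⟩, _, _, _,
      Triangle.distinguished_of_iso₁ (L.map_distinguished _ hT) (L.objObjPreimageIso M).symm⟩
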